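/- arXiv:2604.09867 — 4 statements merged into one kernel-verified Lean document; each statement's English description precedes it below -/
import Mathlib

section
/- Let C be a category, and let (S, η^S, μ^S) and (T, η^T, μ^T) be monads on C. Given a distributive law ℓ of T over S, the endofunctor X ↦ S(T(X)) carries a monad structure whose unit at X is S(η^T_X) ∘ η^S_X : X → S(T(X)) and whose multiplication at X is S(μ^T_X) ∘ μ^S_{T(T(X))} ∘ S(ℓ_{T(X)}) : S(T(S(T(X)))) → S(T(X)); that is, these data satisfy the left and right unit laws and the associativity law of a monad. -/
open CategoryTheory

universe v u

/-- A distributive law of the monad `T` over the monad `S`: a natural family of maps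
`ℓ_X : T (S X) ⟶ S (T X)` interacting suitably with the units and multiplications. -/
structure DistribLaw {C : Type u} [Category.{v} C] (T S : Monad C) where
  app : ∀ X : C, T.obj (S.obj X) ⟶ S.obj (T.obj X)
  naturality : ∀ {X Y : C} (f : X ⟶ Y),
    T.map (S.map f) ≫ app Y = app X ≫ S.map (T.map f)
  unit_T : ∀ X : C, T.η.app (S.obj X) ≫ app X = S.map (T.η.app X)
  unit_S : ∀ X : C, T.map (S.η.app X) ≫ app X = S.η.app (T.obj X)
  mul_T : ∀ X : C,
    T.μ.app (S.obj X) ≫ app X = T.map (app X) ≫ app (T.obj X) ≫ S.map (T.μ.app X)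
  mul_S : ∀ X : C,
    T.map (S.μ.app X) ≫ app X = app (S.obj X) ≫ S.map (app X) ≫ S.μ.app (T.obj X)

variable {C : Type u} [Category.{v} C]

/-- The unit of the Beck composite monad on `X ↦ S (T X)`:
`S(η^T_X) ∘ η^S_X : X ⟶ S (T X)`. -/
def beckUnit (S T : Monad C) (X : C) : X ⟶ S.obj (T.obj X) :=
  S.η.app X ≫ S.map (T.η.app X)

/-- The multiplication of the Beck composite monad on `X ↦ S (T X)`:
`S(μ^T_X) ∘ μ^S_{T(T X)} ∘ S(ℓ_{T X}) : S(T(S(T X))) ⟶ S(T X)`. -/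
def beckMul (S T : Monad C) (ℓ : DistribLaw T S) (X : C) :
    S.obj (T.obj (S.obj (T.obj X))) ⟶ S.obj (T.obj X) :=
  S.map (ℓ.app (T.obj X)) ≫ S.μ.app (T.obj (T.obj X)) ≫ S.map (T.μ.app X)

/-- The canonical `T`-action `g_X = S(μ^T_X) ∘ ℓ_{T X} : T(S(T X)) ⟶ S(T X)`. -/
def beckG (S T : Monad C) (ℓ : DistribLaw T S) (X : C) :
    T.obj (S.obj (T.obj X)) ⟶ S.obj (T.obj X) :=
  ℓ.app (T.obj X) ≫ S.map (T.μ.app X)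

lemma sMu_nat (S : Monad C) {X Y : C} (f : X ⟶ Y) :
    S.map (S.map f) ≫ S.μ.app Y = S.μ.app X ≫ S.map f := by
  simpa using S.μ.naturality f

lemma beckMul_eq (S T : Monad C) (ℓ : DistribLaw T S) (X : C) :
    beckMul S T ℓ X = S.map (beckG S T ℓ X) ≫ S.μ.app (T.obj X) := by
  simp only [beckMul, beckG, Functor.map_comp, Category.assoc]
  erw [← sMu_nat S (T.μ.app X)]

/-- `g` is a `T`-action (the key algebra identity). -/
lemma beckG_action (S T : Monad C) (ℓ : DistribLaw T S) (X : C) :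
    T.μ.app (S.obj (T.obj X)) ≫ beckG S T ℓ X
      = T.map (beckG S T ℓ X) ≫ beckG S T ℓ X := by
  calc T.μ.app (S.obj (T.obj X)) ≫ ℓ.app (T.obj X) ≫ S.map (T.μ.app X)
      = T.map (ℓ.app (T.obj X)) ≫ ℓ.app (T.obj (T.obj X))
          ≫ S.map (T.μ.app (T.obj X)) ≫ S.map (T.μ.app X) := by
        rw [← Category.assoc, ℓ.mul_T (T.obj X)]; simp
    _ = T.map (ℓ.app (T.obj X)) ≫ ℓ.app (T.obj (T.obj X))
          ≫ S.map (T.map (T.μ.app X)) ≫ S.map (T.μ.app X) := by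
        rw [← Functor.map_comp, ← Functor.map_comp, T.assoc]
    _ = T.map (ℓ.app (T.obj X)) ≫ T.map (S.map (T.μ.app X))
          ≫ ℓ.app (T.obj X) ≫ S.map (T.μ.app X) := by
        rw [← Category.assoc (ℓ.app (T.obj (T.obj X)))]
        erw [← ℓ.naturality (T.μ.app X)]
        simp
    _ = T.map (beckG S T ℓ X) ≫ beckG S T ℓ X := by
        simp [beckG]

/-- **Beck's theorem (composite monad).**  Given monads `S`, `T` on `C` and a distributive
law `ℓ` of `T` over `S`, the endofunctor `X ↦ S (T X)` together with the unit
`S(η^T_X) ∘ η^S_X` and the multiplication `S(μ^T_X) ∘ μ^S_{T(T X)} ∘ S(ℓ_{T X})` is a monad: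
the unit and multiplication are natural, and they satisfy the left unit law, the right unit
law, and the associativity law of a monad. -/
theorem beck_composite_is_monad (S T : Monad C) (ℓ : DistribLaw T S) :
    (∀ {X Y : C} (f : X ⟶ Y),
        f ≫ beckUnit S T Y = beckUnit S T X ≫ S.map (T.map f)) ∧
    (∀ {X Y : C} (f : X ⟶ Y),
        S.map (T.map (S.map (T.map f))) ≫ beckMul S T ℓ Y
          = beckMul S T ℓ X ≫ S.map (T.map f)) ∧
    (∀ X : C, beckUnit S T (S.obj (T.obj X)) ≫ beckMul S T ℓ X = 𝟙 (S.obj (T.obj X))) ∧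
    (∀ X : C, S.map (T.map (beckUnit S T X)) ≫ beckMul S T ℓ X = 𝟙 (S.obj (T.obj X))) ∧
    (∀ X : C, S.map (T.map (beckMul S T ℓ X)) ≫ beckMul S T ℓ X
        = beckMul S T ℓ (S.obj (T.obj X)) ≫ beckMul S T ℓ X) := by
  have gnat : ∀ {X Y : C} (f : X ⟶ Y),
      T.map (S.map (T.map f)) ≫ beckG S T ℓ Y = beckG S T ℓ X ≫ S.map (T.map f) := by
    intro X Y f
    simp only [beckG]
    rw [← Category.assoc, ℓ.naturality (T.map f)]
    simp only [Category.assoc, ← Functor.map_comp]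
    have h := T.μ.naturality f
    simp only [Functor.comp_map] at h
    rw [h]
  refine ⟨?_, ?_, ?_, ?_, ?_⟩
  · intro X Y f
    simp only [beckUnit]
    rw [← Category.assoc]
    have h := S.η.naturality f
    simp only [Functor.id_map] at h
    rw [h]
    simp only [Category.assoc, ← Functor.map_comp]
    rw [← T.η.naturality f]
    rfl
  · intro X Y f
    rw [beckMul_eq, beckMul_eq, ← Category.assoc, ← Functor.map_comp, gnat,
      Functor.map_comp, Category.assoc, sMu_nat S (T.map f), Category.assoc]
  · intro X
    simp only [beckUnit, beckMul, Category.assoc]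
    rw [← Category.assoc (S.map (T.η.app (S.obj (T.obj X)))), ← Functor.map_comp,
      ℓ.unit_T (T.obj X)]
    rw [← Category.assoc (S.map (S.map (T.η.app (T.obj X)))), sMu_nat]
    simp [← Functor.map_comp]
  · intro X
    have hin : T.map (beckUnit S T X) ≫ ℓ.app (T.obj X)
        = S.η.app (T.obj X) ≫ S.map (T.map (T.η.app X)) := by
      rw [beckUnit, Functor.map_comp, Category.assoc, ℓ.naturality (T.η.app X),
        ← Category.assoc]
      erw [ℓ.unit_S X]
    simp only [beckMul]
    rw [← Category.assoc, ← Functor.map_comp, hin]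
    simp only [Functor.map_comp, Category.assoc]
    rw [← Category.assoc (S.map (S.map (T.map (T.η.app X)))), sMu_nat]
    simp [← Functor.map_comp]
  · intro X
    set g := beckG S T ℓ X with hg
    -- Key inner identity
    have h1 : T.map (S.map g ≫ S.μ.app (T.obj X)) ≫ g
        = ℓ.app (T.obj (S.obj (T.obj X)))
            ≫ S.map (T.map g ≫ g) ≫ S.μ.app (T.obj X) := by
      calc T.map (S.map g ≫ S.μ.app (T.obj X)) ≫ g
          = T.map (S.map g) ≫ T.map (S.μ.app (T.obj X))
              ≫ ℓ.app (T.obj X) ≫ S.map (T.μ.app X) := by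
            simp [hg, beckG]
        _ = T.map (S.map g) ≫ ℓ.app (S.obj (T.obj X))
              ≫ S.map (ℓ.app (T.obj X)) ≫ S.μ.app (T.obj (T.obj X))
              ≫ S.map (T.μ.app X) := by
            rw [← Category.assoc (T.map (S.μ.app (T.obj X))), ℓ.mul_S (T.obj X)]
            simp
        _ = T.map (S.map g) ≫ ℓ.app (S.obj (T.obj X))
              ≫ S.map (ℓ.app (T.obj X)) ≫ S.map (S.map (T.μ.app X))
              ≫ S.μ.app (T.obj X) := by
            rw [sMu_nat S (T.μ.app X)]
            rfl
        _ = T.map (S.map g) ≫ ℓ.app (S.obj (T.obj X))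
              ≫ S.map g ≫ S.μ.app (T.obj X) := by
            rw [← Category.assoc (S.map (ℓ.app (T.obj X))), ← Functor.map_comp]
            rfl
        _ = ℓ.app (T.obj (S.obj (T.obj X))) ≫ S.map (T.map g)
              ≫ S.map g ≫ S.μ.app (T.obj X) := by
            rw [← Category.assoc, ℓ.naturality g, Category.assoc]
        _ = ℓ.app (T.obj (S.obj (T.obj X)))
              ≫ S.map (T.map g ≫ g) ≫ S.μ.app (T.obj X) := by
            rw [Functor.map_comp, Category.assoc]
    calc S.map (T.map (beckMul S T ℓ X)) ≫ beckMul S T ℓ X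
        = S.map (T.map (S.map g ≫ S.μ.app (T.obj X)) ≫ g) ≫ S.μ.app (T.obj X) := by
          rw [beckMul_eq, ← hg, ← Category.assoc, ← Functor.map_comp]
      _ = S.map (ℓ.app (T.obj (S.obj (T.obj X)))
            ≫ S.map (T.map g ≫ g) ≫ S.μ.app (T.obj X)) ≫ S.μ.app (T.obj X) := by
          rw [h1]
      _ = S.map (ℓ.app (T.obj (S.obj (T.obj X)))
            ≫ S.map (T.μ.app (S.obj (T.obj X)) ≫ g) ≫ S.μ.app (T.obj X))
            ≫ S.μ.app (T.obj X) := by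
          rw [← beckG_action, hg]
      _ = S.map (ℓ.app (T.obj (S.obj (T.obj X))))
            ≫ S.map (S.map (T.μ.app (S.obj (T.obj X)) ≫ g))
            ≫ S.map (S.μ.app (T.obj X)) ≫ S.μ.app (T.obj X) := by
          simp
      _ = S.map (ℓ.app (T.obj (S.obj (T.obj X))))
            ≫ S.map (S.map (T.μ.app (S.obj (T.obj X)) ≫ g))
            ≫ S.μ.app (S.obj (T.obj X)) ≫ S.μ.app (T.obj X) := by
          rw [S.assoc (T.obj X)]
      _ = S.map (ℓ.app (T.obj (S.obj (T.obj X))))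
            ≫ S.map (S.map (T.μ.app (S.obj (T.obj X))))
            ≫ S.μ.app (T.obj (S.obj (T.obj X))) ≫ S.map g ≫ S.μ.app (T.obj X) := by
          rw [Functor.map_comp, Functor.map_comp, Category.assoc,
            ← Category.assoc (S.map (S.map g)), sMu_nat S g]
          simp
      _ = beckMul S T ℓ (S.obj (T.obj X)) ≫ beckMul S T ℓ X := by
          rw [beckMul_eq, beckMul_eq, ← hg]
          simp only [beckG, Functor.map_comp, Category.assoc]
end

section
/- Let C be a category and let (T_0, η^0, μ^0), (T_1, η^1, μ^1), (T_2, η^2, μ^2) be monads on C, equipped with distributive laws λ^{01} of T_0 over T_1, λ^{02} of T_0 over T_2, and λ^{12} of T_1 over T_2 satisfying the Yang–Baxter equation. Then the natural transformation whose component at X is T_2(λ^{01}_X) ∘ λ^{02}_{T_1(X)} : T_0(T_2(T_1(X))) → T_2(T_1(T_0(X))) is a distributive law of the monad T_0 over the Beck composite monad X ↦ T_2(T_1(X)) induced by λ^{12}. -/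
open CategoryTheory

universe v u

variable {C : Type u} [Category.{v} C]

/-- The data `ℓ_X : Tf (Sf X) ⟶ Sf (Tf X)` is a distributive law of the monad structure
`(Tf, ηT, μT)` over the monad structure `(Sf, ηS, μS)`: it is natural and it satisfies the
four compatibility axioms with the units and the multiplications. -/
def IsDistribLawData (Tf Sf : C ⥤ C)
    (ηT : ∀ X : C, X ⟶ Tf.obj X) (μT : ∀ X : C, Tf.obj (Tf.obj X) ⟶ Tf.obj X)
    (ηS : ∀ X : C, X ⟶ Sf.obj X) (μS : ∀ X : C, Sf.obj (Sf.obj X) ⟶ Sf.obj X)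
    (ℓ : ∀ X : C, Tf.obj (Sf.obj X) ⟶ Sf.obj (Tf.obj X)) : Prop :=
  (∀ {X Y : C} (f : X ⟶ Y), Tf.map (Sf.map f) ≫ ℓ Y = ℓ X ≫ Sf.map (Tf.map f)) ∧
  (∀ X : C, ηT (Sf.obj X) ≫ ℓ X = Sf.map (ηT X)) ∧
  (∀ X : C, Tf.map (ηS X) ≫ ℓ X = ηS (Tf.obj X)) ∧
  (∀ X : C, μT (Sf.obj X) ≫ ℓ X = Tf.map (ℓ X) ≫ ℓ (Tf.obj X) ≫ Sf.map (μT X)) ∧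
  (∀ X : C, Tf.map (μS X) ≫ ℓ X = ℓ (Sf.obj X) ≫ Sf.map (ℓ X) ≫ μS (Tf.obj X))

/-- `ℓ` is a distributive law of the monad `T` over the monad `S`. -/
def IsMonadDistribLaw (T S : Monad C)
    (ℓ : ∀ X : C, T.obj (S.obj X) ⟶ S.obj (T.obj X)) : Prop :=
  IsDistribLawData T.toFunctor S.toFunctor
    (fun X => T.η.app X) (fun X => T.μ.app X)
    (fun X => S.η.app X) (fun X => S.μ.app X) ℓ

/-- The Yang–Baxter equation for three distributive laws between the monads `T₀`, `T₁`, `T₂`. -/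
def YangBaxter (T0 T1 T2 : Monad C)
    (l01 : ∀ X : C, T0.obj (T1.obj X) ⟶ T1.obj (T0.obj X))
    (l02 : ∀ X : C, T0.obj (T2.obj X) ⟶ T2.obj (T0.obj X))
    (l12 : ∀ X : C, T1.obj (T2.obj X) ⟶ T2.obj (T1.obj X)) : Prop :=
  ∀ X : C, l01 (T2.obj X) ≫ T1.map (l02 X) ≫ l12 (T0.obj X)
    = T0.map (l12 X) ≫ l02 (T1.obj X) ≫ T2.map (l01 X)

/-- Given monads `T₀`, `T₁`, `T₂` with distributive laws `λ⁰¹`, `λ⁰²`, `λ¹²` satisfying the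
Yang–Baxter equation, the family `X ↦ T₂(λ⁰¹_X) ∘ λ⁰²_{T₁ X} : T₀(T₂(T₁ X)) ⟶ T₂(T₁(T₀ X))`
is a distributive law of the monad `T₀` over the Beck composite monad `X ↦ T₂(T₁ X)`
induced by `λ¹²` (whose unit is `T₂(η¹_X) ∘ η²_X` and whose multiplication is
`T₂(μ¹_X) ∘ μ²_{T₁(T₁ X)} ∘ T₂(λ¹²_{T₁ X})`). -/
theorem distribLaw_over_beck_composite (T0 T1 T2 : Monad C)
    (l01 : ∀ X : C, T0.obj (T1.obj X) ⟶ T1.obj (T0.obj X))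
    (l02 : ∀ X : C, T0.obj (T2.obj X) ⟶ T2.obj (T0.obj X))
    (l12 : ∀ X : C, T1.obj (T2.obj X) ⟶ T2.obj (T1.obj X))
    (h01 : IsMonadDistribLaw T0 T1 l01)
    (h02 : IsMonadDistribLaw T0 T2 l02)
    (h12 : IsMonadDistribLaw T1 T2 l12)
    (hYB : YangBaxter T0 T1 T2 l01 l02 l12) :
    IsDistribLawData T0.toFunctor (T1.toFunctor ⋙ T2.toFunctor)
      (fun X => T0.η.app X) (fun X => T0.μ.app X)
      (fun X => T2.η.app X ≫ T2.map (T1.η.app X))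
      (fun X => T2.map (l12 (T1.obj X)) ≫ T2.μ.app (T1.obj (T1.obj X))
        ≫ T2.map (T1.μ.app X))
      (fun X => l02 (T1.obj X) ≫ T2.map (l01 X)) := by
  obtain ⟨n01, u01T, u01S, m01T, m01S⟩ := h01
  obtain ⟨n02, u02T, u02S, m02T, m02S⟩ := h02
  obtain ⟨n12, u12T, u12S, m12T, m12S⟩ := h12
  dsimp only [Functor.id_obj] at n01 u01T u01S m01T m01S n02 u02T u02S m02T m02S n12 u12T u12S m12T m12S
  refine ⟨?_, ?_, ?_, ?_, ?_⟩
  · -- naturality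
    intro X Y f
    simp only [Functor.comp_obj, Functor.comp_map, Category.assoc]
    slice_lhs 1 2 => rw [n02 (T1.map f)]
    slice_lhs 2 3 => rw [← Functor.map_comp, n01 f, Functor.map_comp]
  · -- unit of T0
    intro X
    simp only [Functor.comp_obj, Functor.comp_map]
    slice_lhs 1 2 => rw [u02T (T1.obj X)]
    rw [← Functor.map_comp, u01T X]
  · -- unit of the composite
    intro X
    simp only [Functor.comp_obj, Functor.map_comp, Category.assoc]
    slice_lhs 2 3 => rw [n02 (T1.η.app X)]
    simp only [Functor.id_obj]
    slice_lhs 1 2 => rw [u02S X]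
    slice_lhs 2 3 => rw [← Functor.map_comp, u01S X]
  · -- multiplication of T0
    intro X
    simp only [Functor.comp_obj, Functor.comp_map, Functor.map_comp, Category.assoc]
    slice_lhs 1 2 => rw [m02T (T1.obj X)]
    slice_lhs 3 4 => rw [← Functor.map_comp, m01T X, Functor.map_comp, Functor.map_comp]
    slice_lhs 2 3 => rw [← n02 (l01 X)]
    simp only [Category.assoc]
  · -- multiplication of the composite
    intro X
    have mu2nat : ∀ {A B : C} (f : A ⟶ B),
        T2.μ.app A ≫ T2.map f = T2.map (T2.map f) ≫ T2.μ.app B := by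
      intro A B f
      have := (T2.μ.naturality f).symm
      simpa using this
    simp only [Functor.comp_obj, Functor.comp_map, Functor.map_comp, Category.assoc]
    slice_lhs 3 4 => rw [n02 (T1.μ.app X)]
    simp only [Functor.comp_obj]
    slice_lhs 2 3 => rw [m02S (T1.obj (T1.obj X))]
    slice_lhs 1 2 => rw [n02 (l12 (T1.obj X))]
    slice_lhs 4 5 => rw [mu2nat (show T0.obj (T1.obj (T1.obj X)) ⟶ T0.obj (T1.obj X) from T0.map (T1.μ.app X))]
    slice_lhs 5 6 => rw [mu2nat (l01 X)]
    simp only [Functor.comp_obj, Functor.comp_map, Category.assoc]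
    slice_lhs 4 5 => rw [← Functor.map_comp, ← Functor.map_comp, m01S X,
      Functor.map_comp, Functor.map_comp, Functor.map_comp, Functor.map_comp]
    slice_lhs 2 4 => rw [← Functor.map_comp, ← Functor.map_comp, ← hYB (T1.obj X),
      Functor.map_comp, Functor.map_comp]
    slice_lhs 4 5 => rw [← Functor.map_comp, ← n12 (l01 X), Functor.map_comp]
    slice_rhs 6 7 => rw [mu2nat (show T1.obj (T1.obj (T0.obj X)) ⟶ T1.obj (T0.obj X) from T1.μ.app (T0.obj X))]
    simp only [Functor.comp_obj, Functor.comp_map, Category.assoc]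
end

section
/- Let C be a category and let (T_0, η^0, μ^0), (T_1, η^1, μ^1), (T_2, η^2, μ^2) be monads on C, equipped with distributive laws λ^{01} of T_0 over T_1, λ^{02} of T_0 over T_2, and λ^{12} of T_1 over T_2 satisfying the Yang–Baxter equation. Then the natural transformation whose component at X is λ^{12}_{T_0(X)} ∘ T_1(λ^{02}_X) : T_1(T_0(T_2(X))) → T_2(T_1(T_0(X))) is a distributive law of the Beck composite monad X ↦ T_1(T_0(X)) induced by λ^{01} over the monad T_2. -/
open CategoryTheory

universe v u

variable {C : Type u} [Category.{v} C]

/-- Given monads `T₀`, `T₁`, `T₂` with distributive laws `λ⁰¹`, `λ⁰²`, `λ¹²` satisfying the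
Yang–Baxter equation, the family `X ↦ λ¹²_{T₀ X} ∘ T₁(λ⁰²_X) : T₁(T₀(T₂ X)) ⟶ T₂(T₁(T₀ X))`
is a distributive law of the Beck composite monad `X ↦ T₁(T₀ X)` induced by `λ⁰¹`
(whose unit is `T₁(η⁰_X) ∘ η¹_X` and whose multiplication is
`T₁(μ⁰_X) ∘ μ¹_{T₀(T₀ X)} ∘ T₁(λ⁰¹_{T₀ X})`) over the monad `T₂`. -/
theorem beck_composite_distribLaw_over (T0 T1 T2 : Monad C)
    (l01 : ∀ X : C, T0.obj (T1.obj X) ⟶ T1.obj (T0.obj X))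
    (l02 : ∀ X : C, T0.obj (T2.obj X) ⟶ T2.obj (T0.obj X))
    (l12 : ∀ X : C, T1.obj (T2.obj X) ⟶ T2.obj (T1.obj X))
    (h01 : IsMonadDistribLaw T0 T1 l01)
    (h02 : IsMonadDistribLaw T0 T2 l02)
    (h12 : IsMonadDistribLaw T1 T2 l12)
    (hYB : YangBaxter T0 T1 T2 l01 l02 l12) :
    IsDistribLawData (T0.toFunctor ⋙ T1.toFunctor) T2.toFunctor
      (fun X => T1.η.app X ≫ T1.map (T0.η.app X))
      (fun X => T1.map (l01 (T0.obj X)) ≫ T1.μ.app (T0.obj (T0.obj X))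
        ≫ T1.map (T0.μ.app X))
      (fun X => T2.η.app X) (fun X => T2.μ.app X)
      (fun X => T1.map (l02 X) ≫ l12 (T0.obj X)) := by
  obtain ⟨n01, ua01, ub01, ma01, mb01⟩ := h01
  obtain ⟨n02, ua02, ub02, ma02, mb02⟩ := h02
  obtain ⟨n12, ua12, ub12, ma12, mb12⟩ := h12
  simp only [] at n01 ua01 ub01 ma01 mb01 n02 ua02 ub02 ma02 mb02 n12 ua12 ub12 ma12 mb12
  refine ⟨?_, ?_, ?_, ?_, ?_⟩
  · -- naturality
    intro X Y f
    simp only [Functor.comp_obj, Functor.comp_map]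
    slice_lhs 1 2 => rw [← T1.toFunctor.map_comp, n02 f, T1.toFunctor.map_comp]
    slice_lhs 2 3 => rw [n12 (T0.map f)]
    simp [Category.assoc]
  · -- unit of the composite monad
    intro X
    simp only [Functor.comp_obj, Functor.comp_map]
    slice_lhs 2 3 => rw [← T1.toFunctor.map_comp, ua02 X]
    slice_lhs 2 3 => rw [n12 (T0.η.app X)]
    simp only [Functor.id_obj]
    slice_lhs 1 2 => rw [ua12 X]
    rw [← T2.toFunctor.map_comp]
  · -- unit of T2
    intro X
    simp only [Functor.comp_obj, Functor.comp_map]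
    slice_lhs 1 2 => rw [← T1.toFunctor.map_comp, ub02 X]
    exact ub12 (T0.obj X)
  · -- multiplication of the composite monad
    intro X
    simp only [Functor.comp_obj, Functor.comp_map]
    slice_lhs 3 4 =>
      rw [← T1.toFunctor.map_comp, ma02 X, T1.toFunctor.map_comp, T1.toFunctor.map_comp]
    slice_lhs 2 3 => rw [← T1.μ.naturality (T0.map (l02 X))]
    slice_lhs 3 4 => rw [← T1.μ.naturality (l02 (T0.obj X))]
    simp only [Functor.comp_obj, Functor.comp_map, Category.assoc]
    slice_lhs 5 6 => rw [n12 (T0.μ.app X)]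
    simp only [Functor.comp_obj]
    slice_lhs 4 5 => rw [ma12 (T0.obj (T0.obj X))]
    slice_lhs 1 2 => rw [← T1.toFunctor.map_comp, ← n01 (l02 X), T1.toFunctor.map_comp]
    slice_lhs 2 4 =>
      rw [← T1.toFunctor.map_comp, ← T1.toFunctor.map_comp, hYB (T0.obj X),
        T1.toFunctor.map_comp, T1.toFunctor.map_comp]
    slice_lhs 4 5 => rw [n12 (l01 (T0.obj X))]
    simp [Category.assoc]
  · -- multiplication of T2
    intro X
    simp only [Functor.comp_obj, Functor.comp_map]
    slice_lhs 1 2 =>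
      rw [← T1.toFunctor.map_comp, mb02 X, T1.toFunctor.map_comp, T1.toFunctor.map_comp]
    slice_lhs 3 4 => rw [mb12 (T0.obj X)]
    slice_lhs 2 3 => rw [n12 (l02 X)]
    simp [Category.assoc]
end

section
/- Let C be a category and let (T_0, η^0, μ^0), (T_1, η^1, μ^1), (T_2, η^2, μ^2) be monads on C, equipped with distributive laws λ^{01} of T_0 over T_1, λ^{02} of T_0 over T_2, and λ^{12} of T_1 over T_2 satisfying the Yang–Baxter equation. Then the two monad structures on the endofunctor X ↦ T_2(T_1(T_0(X))) coincide: the Beck composite of the monad T_0 with the Beck composite monad T_2∘T_1 (using the distributive law with components T_2(λ^{01}_X) ∘ λ^{02}_{T_1(X)}) has the same unit and the same multiplication as the Beck composite of the Beck composite monad T_1∘T_0 with the monad T_2 (using the distributive law with components λ^{12}_{T_0(X)} ∘ T_1(λ^{02}_X)). -/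
open CategoryTheory

universe v u

variable {C : Type u} [Category.{v} C]

/-- Given monads `T₀`, `T₁`, `T₂` with distributive laws `λ⁰¹`, `λ⁰²`, `λ¹²` satisfying the
Yang–Baxter equation, the two monad structures on the endofunctor `X ↦ T₂(T₁(T₀ X))`
coincide: the Beck composite of the monad `T₀` with the Beck composite monad `T₂ ∘ T₁`
(via the distributive law `X ↦ T₂(λ⁰¹_X) ∘ λ⁰²_{T₁ X}`) has the same unit and the same
multiplication as the Beck composite of the Beck composite monad `T₁ ∘ T₀` with the
monad `T₂` (via the distributive law `X ↦ λ¹²_{T₀ X} ∘ T₁(λ⁰²_X)`). -/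
theorem beck_composites_agree (T0 T1 T2 : Monad C)
    (l01 : ∀ X : C, T0.obj (T1.obj X) ⟶ T1.obj (T0.obj X))
    (l02 : ∀ X : C, T0.obj (T2.obj X) ⟶ T2.obj (T0.obj X))
    (l12 : ∀ X : C, T1.obj (T2.obj X) ⟶ T2.obj (T1.obj X))
    (h01 : IsMonadDistribLaw T0 T1 l01)
    (h02 : IsMonadDistribLaw T0 T2 l02)
    (h12 : IsMonadDistribLaw T1 T2 l12)
    (hYB : YangBaxter T0 T1 T2 l01 l02 l12) :
    -- the units of the two Beck composite monad structures on `X ↦ T₂(T₁(T₀ X))` agree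
    (∀ X : C,
      (T2.η.app X ≫ T2.map (T1.η.app X)) ≫ T2.map (T1.map (T0.η.app X))
        = T2.η.app X ≫ T2.map (T1.η.app X ≫ T1.map (T0.η.app X))) ∧
    -- the multiplications of the two Beck composite monad structures agree
    (∀ X : C,
      -- multiplication of the Beck composite of `T₀` with the monad `T₂ ∘ T₁`
      T2.map (T1.map (l02 (T1.obj (T0.obj X)) ≫ T2.map (l01 (T0.obj X))))
        ≫ (T2.map (l12 (T1.obj (T0.obj (T0.obj X))))
            ≫ T2.μ.app (T1.obj (T1.obj (T0.obj (T0.obj X))))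
            ≫ T2.map (T1.μ.app (T0.obj (T0.obj X))))
        ≫ T2.map (T1.map (T0.μ.app X))
      =
      -- multiplication of the Beck composite of the monad `T₁ ∘ T₀` with `T₂`
      T2.map (T1.map (l02 (T1.obj (T0.obj X))) ≫ l12 (T0.obj (T1.obj (T0.obj X))))
        ≫ T2.μ.app (T1.obj (T0.obj (T1.obj (T0.obj X))))
        ≫ T2.map (T1.map (l01 (T0.obj X)) ≫ T1.μ.app (T0.obj (T0.obj X))
            ≫ T1.map (T0.μ.app X))) := by
  refine ⟨fun X => by simp, fun X => ?_⟩
  have nat12 := h12.1 (l01 (T0.obj X))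
  have natμ := T2.μ.naturality (T1.map (l01 (T0.obj X)))
  simp only [Functor.map_comp, Category.assoc]
  rw [← Functor.map_comp_assoc T2.toFunctor (T1.map (T2.map (l01 (T0.obj X)))), nat12,
    Functor.map_comp_assoc,
    ]
  simp only [Functor.comp_map] at natμ
  rw [reassoc_of% natμ]
end
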